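/- Let y : [0,T] → ℝ be continuous and nonnegative, let f : [0,T] → ℝ be continuous and positive, and let c > 0. Suppose y(t) ≤ f(t) + c² ∫₀ᵗ ∫₀^{t₁} y(τ) dτ dt₁ for all t ∈ [0,T]. Then for all t ∈ [0,T], y(t) ≤ f(t) + c² ∫₀ᵗ ∫₀^{t₁} f(s)·exp(c(t − 2t₁ + s)) ds dt₁. -/
import Mathlib

open intervalIntegral Set

lemma prim_contOn {T : ℝ} (hT : 0 ≤ T) {g : ℝ → ℝ} (hg : ContinuousOn g (Icc 0 T)) :
    ContinuousOn (fun t => ∫ s in (0:ℝ)..t, g s) (Icc 0 T) := by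
  have h : uIcc (0:ℝ) T = Icc 0 T := uIcc_of_le hT
  rw [← h] at hg ⊢
  exact intervalIntegral.continuousOn_primitive_interval (by rw [h] at hg ⊢; exact hg.integrableOn_Icc)

lemma prim_hasDerivAt {T : ℝ} {g : ℝ → ℝ} (hg : ContinuousOn g (Icc 0 T)) {x : ℝ}
    (hx : x ∈ Ioo (0:ℝ) T) :
    HasDerivAt (fun t => ∫ s in (0:ℝ)..t, g s) (g x) x := by
  have hnhds : Icc (0:ℝ) T ∈ nhds x := Icc_mem_nhds hx.1 hx.2
  have hsub : uIcc (0:ℝ) x ⊆ Icc 0 T := by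
    rw [uIcc_of_le hx.1.le]; exact Icc_subset_Icc le_rfl hx.2.le
  have hint : IntervalIntegrable g MeasureTheory.volume 0 x := (hg.mono hsub).intervalIntegrable
  have hmeas : StronglyMeasurableAtFilter g (nhds x) :=
    ⟨Icc 0 T, hnhds, hg.aestronglyMeasurable measurableSet_Icc⟩
  exact intervalIntegral.integral_hasDerivAt_right hint hmeas (hg.continuousAt hnhds)

lemma nonpos_of_deriv_nonpos {T : ℝ} (hT : 0 ≤ T) {φ φ' : ℝ → ℝ}
    (hcont : ContinuousOn φ (Icc 0 T))
    (hd : ∀ x ∈ Ioo (0:ℝ) T, HasDerivAt φ (φ' x) x)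
    (hd0 : ∀ x ∈ Ioo (0:ℝ) T, φ' x ≤ 0)
    (h0 : φ 0 = 0) : ∀ t ∈ Icc (0:ℝ) T, φ t ≤ 0 := by
  have hanti : AntitoneOn φ (Icc 0 T) := by
    apply antitoneOn_of_deriv_nonpos (convex_Icc 0 T) hcont
    · rw [interior_Icc]
      exact fun x hx => (hd x hx).differentiableAt.differentiableWithinAt
    · rw [interior_Icc]
      intro x hx
      rw [(hd x hx).deriv]
      exact hd0 x hx
  intro t ht
  have := hanti (left_mem_Icc.mpr hT) ht ht.1
  rwa [h0] at this

/-- Gronwall–Bellman type inequality with an iterated double integral. -/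
theorem gronwall_bellman_double_integral (T c : ℝ) (hT : 0 ≤ T) (hc : 0 < c)
    (y f : ℝ → ℝ)
    (hy : ContinuousOn y (Icc 0 T))
    (hynn : ∀ t ∈ Icc (0:ℝ) T, 0 ≤ y t)
    (hf : ContinuousOn f (Icc 0 T))
    (hfpos : ∀ t ∈ Icc (0:ℝ) T, 0 < f t)
    (hineq : ∀ t ∈ Icc (0:ℝ) T,
      y t ≤ f t + c ^ 2 * ∫ t₁ in (0:ℝ)..t, ∫ τ in (0:ℝ)..t₁, y τ) :
    ∀ t ∈ Icc (0:ℝ) T,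
      y t ≤ f t + c ^ 2 *
        ∫ t₁ in (0:ℝ)..t, ∫ s in (0:ℝ)..t₁,
          f s * Real.exp (c * (t - 2 * t₁ + s)) := by
  set Y : ℝ → ℝ := fun t => ∫ τ in (0:ℝ)..t, y τ with hY_def
  set z : ℝ → ℝ := fun t => ∫ t₁ in (0:ℝ)..t, Y t₁ with hz_def
  set F : ℝ → ℝ := fun t => ∫ s in (0:ℝ)..t, f s * Real.exp (c * s) with hF_def
  set G : ℝ → ℝ := fun t => ∫ t₁ in (0:ℝ)..t, Real.exp (-(2 * c * t₁)) * F t₁ with hG_def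
  -- continuity of the primitives
  have hYc : ContinuousOn Y (Icc 0 T) := prim_contOn hT hy
  have hzc : ContinuousOn z (Icc 0 T) := prim_contOn hT hYc
  have hfe : ContinuousOn (fun s => f s * Real.exp (c * s)) (Icc 0 T) :=
    hf.mul ((Real.continuous_exp.comp (continuous_const.mul continuous_id)).continuousOn)
  have hFc : ContinuousOn F (Icc 0 T) := prim_contOn hT hfe
  have hGe : ContinuousOn (fun t₁ => Real.exp (-(2 * c * t₁)) * F t₁) (Icc 0 T) :=
    ((Real.continuous_exp.comp (continuous_const.mul continuous_id).neg).continuousOn).mul hFc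
  have hGc : ContinuousOn G (Icc 0 T) := prim_contOn hT hGe
  -- derivatives on the interior
  have hYd : ∀ x ∈ Ioo (0:ℝ) T, HasDerivAt Y (y x) x := fun x hx => prim_hasDerivAt hy hx
  have hzd : ∀ x ∈ Ioo (0:ℝ) T, HasDerivAt z (Y x) x := fun x hx => prim_hasDerivAt hYc hx
  have hFd : ∀ x ∈ Ioo (0:ℝ) T, HasDerivAt F (f x * Real.exp (c * x)) x :=
    fun x hx => prim_hasDerivAt hfe hx
  have hGd : ∀ x ∈ Ioo (0:ℝ) T, HasDerivAt G (Real.exp (-(2 * c * x)) * F x) x :=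
    fun x hx => prim_hasDerivAt hGe hx
  -- Step A: (Y t - c z t) * exp (c t) ≤ F t on [0, T]
  have stepA : ∀ t ∈ Icc (0:ℝ) T, (Y t - c * z t) * Real.exp (c * t) - F t ≤ 0 := by
    apply nonpos_of_deriv_nonpos hT
      (φ' := fun x => ((y x - c * Y x) * Real.exp (c * x)
        + (Y x - c * z x) * (Real.exp (c * x) * c)) - f x * Real.exp (c * x))
    · exact ((hYc.sub (continuousOn_const.mul hzc)).mul
        ((Real.continuous_exp.comp (continuous_const.mul continuous_id)).continuousOn)).sub hFc
    · intro x hx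
      have hexp : HasDerivAt (fun t => Real.exp (c * t)) (Real.exp (c * x) * c) x := by
        simpa using ((hasDerivAt_id x).const_mul c).exp
      exact (((hYd x hx).sub ((hzd x hx).const_mul c)).mul hexp).sub (hFd x hx)
    · intro x hx
      have hxI : x ∈ Icc (0:ℝ) T := Ioo_subset_Icc_self hx
      have h1 : y x ≤ f x + c ^ 2 * z x := hineq x hxI
      have he : (0:ℝ) < Real.exp (c * x) := Real.exp_pos _
      have heq : (y x - c * Y x) * Real.exp (c * x)
          + (Y x - c * z x) * (Real.exp (c * x) * c) - f x * Real.exp (c * x)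
          = (y x - f x - c ^ 2 * z x) * Real.exp (c * x) := by ring
      rw [heq]
      nlinarith
    · simp [hY_def, hz_def, hF_def]
  -- Step B: z t * exp (-(c t)) ≤ G t on [0, T]
  have stepB : ∀ t ∈ Icc (0:ℝ) T, z t * Real.exp (-(c * t)) - G t ≤ 0 := by
    apply nonpos_of_deriv_nonpos hT
      (φ' := fun x => (Y x * Real.exp (-(c * x)) + z x * (Real.exp (-(c * x)) * -(c * 1)))
        - Real.exp (-(2 * c * x)) * F x)
    · exact (hzc.mul
        ((Real.continuous_exp.comp (continuous_const.mul continuous_id).neg).continuousOn)).sub hGc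
    · intro x hx
      have hexp : HasDerivAt (fun t => Real.exp (-(c * t))) (Real.exp (-(c * x)) * -(c * 1)) x :=
        (((hasDerivAt_id x).const_mul c).neg).exp
      exact ((hzd x hx).mul hexp).sub (hGd x hx)
    · intro x hx
      have hxI : x ∈ Icc (0:ℝ) T := Ioo_subset_Icc_self hx
      have hA := stepA x hxI
      have key : Real.exp (c * x) * Real.exp (-(2 * c * x)) = Real.exp (-(c * x)) := by
        rw [← Real.exp_add]; ring_nf
      have h2 : Y x * Real.exp (-(c * x)) + z x * (Real.exp (-(c * x)) * -(c * 1))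
          - Real.exp (-(2 * c * x)) * F x
          = ((Y x - c * z x) * Real.exp (c * x) - F x) * Real.exp (-(2 * c * x)) := by
        rw [← key]; ring
      rw [h2]
      have := Real.exp_pos (-(2 * c * x))
      nlinarith
    · simp [hz_def, hG_def]
  -- conclusion
  intro t ht
  have hzG : z t ≤ Real.exp (c * t) * G t := by
    have hB := stepB t ht
    have h := mul_le_mul_of_nonneg_right (sub_nonpos.mp hB) (Real.exp_pos (c * t)).le
    have hone : Real.exp (-(c * t)) * Real.exp (c * t) = 1 := by
      rw [← Real.exp_add]; simp
    calc z t = z t * Real.exp (-(c * t)) * Real.exp (c * t) := by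
          rw [mul_assoc, hone, mul_one]
      _ ≤ G t * Real.exp (c * t) := h
      _ = Real.exp (c * t) * G t := mul_comm _ _
  have hdouble : (∫ t₁ in (0:ℝ)..t, ∫ s in (0:ℝ)..t₁,
      f s * Real.exp (c * (t - 2 * t₁ + s))) = Real.exp (c * t) * G t := by
    have hin : ∀ t₁ : ℝ, (∫ s in (0:ℝ)..t₁, f s * Real.exp (c * (t - 2 * t₁ + s)))
        = Real.exp (c * t) * (Real.exp (-(2 * c * t₁)) * F t₁) := by
      intro t₁
      have hptw : ∀ s : ℝ, f s * Real.exp (c * (t - 2 * t₁ + s))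
          = (Real.exp (c * t) * Real.exp (-(2 * c * t₁))) * (f s * Real.exp (c * s)) := by
        intro s
        rw [show c * (t - 2 * t₁ + s) = c * t + (-(2 * c * t₁) + c * s) by ring,
          Real.exp_add, Real.exp_add]
        ring
      rw [intervalIntegral.integral_congr (fun s _ => hptw s),
        intervalIntegral.integral_const_mul]
      simp only [hF_def]
      ring
    rw [intervalIntegral.integral_congr (fun t₁ _ => hin t₁),
      intervalIntegral.integral_const_mul]
  calc y t ≤ f t + c ^ 2 * z t := hineq t ht
    _ ≤ f t + c ^ 2 * (Real.exp (c * t) * G t) := by nlinarith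
    _ = f t + c ^ 2 * ∫ t₁ in (0:ℝ)..t, ∫ s in (0:ℝ)..t₁,
        f s * Real.exp (c * (t - 2 * t₁ + s)) := by rw [hdouble]
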